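/- The d-grid is O_HD: Let d ≥ 1. Every harmonic function u on the d-grid of finite energy is constant. -/

import Mathlib

open scoped ENNReal
open Filter

variable {V : Type*}

/-- A *flow* on a graph: an antisymmetric function on ordered pairs of vertices
that vanishes on non-adjacent pairs. -/
def IsFlow (G : SimpleGraph V) (θ : V → V → ℝ) : Prop :=
  (∀ u v, θ u v = -θ v u) ∧ ∀ u v, ¬G.Adj u v → θ u v = 0

/-- The divergence (source strength) of a flow at a vertex. -/
noncomputable def divg (G : SimpleGraph V) [G.LocallyFinite] (θ : V → V → ℝ) (v : V) : ℝ :=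
  ∑ u ∈ G.neighborFinset v, θ v u

/-- The energy `(1/2) ∑ r(u,v) θ(u,v)²` dissipated by a flow, valued in `[0,∞]`. -/
noncomputable def energy (r θ : V → V → ℝ) : ℝ≥0∞ :=
  2⁻¹ * ∑' p : V × V, ENNReal.ofReal (r p.1 p.2 * θ p.1 p.2 ^ 2)

open Classical in
/-- The source distribution with a unit source at `p` and a unit sink at `q`. -/
noncomputable def pointSource (p q v : V) : ℝ :=
  if v = p then 1 else if v = q then -1 else 0

/-- The odd resistance: the infimum of the energy over all finite-energy unit
flows from `p` to `q`. -/
noncomputable def oddRes (G : SimpleGraph V) [G.LocallyFinite] (r : V → V → ℝ)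
    (p q : V) : ℝ≥0∞ :=
  ⨅ (θ : V → V → ℝ) (_ : IsFlow G θ ∧ energy r θ ≠ ⊤ ∧ divg G θ = pointSource p q),
    energy r θ

/-- The cut resistance: the infimum of the energy over all unit flows from `p` to `q`
vanishing on every edge with an endpoint outside `S`. -/
noncomputable def cutRes (G : SimpleGraph V) [G.LocallyFinite] (r : V → V → ℝ)
    (p q : V) (S : Finset V) : ℝ≥0∞ :=
  ⨅ (θ : V → V → ℝ) (_ : IsFlow G θ ∧ divg G θ = pointSource p q ∧
      ∀ u v, (u ∉ S ∨ v ∉ S) → θ u v = 0), energy r θ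

/-- The even resistance: the infimum of the cut resistances over all finite
vertex sets containing `p` and `q`. -/
noncomputable def evenRes (G : SimpleGraph V) [G.LocallyFinite] (r : V → V → ℝ)
    (p q : V) : ℝ≥0∞ :=
  ⨅ (S : Finset V) (_ : p ∈ S ∧ q ∈ S), cutRes G r p q S

/-- The short resistance: the infimum of the energy over all antisymmetric edge
functions supported on edges with at least one endpoint in `S` whose divergence
at every vertex of `S` is that of a unit flow from `p` to `q`. -/
noncomputable def shortRes (G : SimpleGraph V) [G.LocallyFinite] (r : V → V → ℝ)
    (p q : V) (S : Finset V) : ℝ≥0∞ :=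
  ⨅ (θ : V → V → ℝ) (_ : (∀ u v, θ u v = -θ v u) ∧ (∀ u v, ¬G.Adj u v → θ u v = 0) ∧
      (∀ u v, u ∉ S → v ∉ S → θ u v = 0) ∧
      ∀ v ∈ S, divg G θ v = pointSource p q v), energy r θ

/-- A function on the vertices of a network is harmonic if the net current it
induces out of each vertex is zero. -/
def Harmonic (G : SimpleGraph V) [G.LocallyFinite] (r : V → V → ℝ) (u : V → ℝ) : Prop :=
  ∀ v, ∑ w ∈ G.neighborFinset v, (u v - u w) / r v w = 0

open Classical in
/-- The Dirichlet energy `(1/2) ∑ (u(v)-u(w))²/r(v,w)` of a function on the vertices. -/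
noncomputable def fnEnergy (G : SimpleGraph V) (r : V → V → ℝ) (u : V → ℝ) : ℝ≥0∞ :=
  2⁻¹ * ∑' p : V × V,
    if G.Adj p.1 p.2 then ENNReal.ofReal ((u p.1 - u p.2) ^ 2 / r p.1 p.2) else 0

/-- The `d`-grid: vertices are the points of `ℤ^d`, with an edge between two points at
`ℓ¹`-distance `1`. -/
def gridGraph (d : ℕ) : SimpleGraph (Fin d → ℤ) where
  Adj p q := ∑ i, |p i - q i| = 1
  symm := by
    constructor
    intro p q h
    rw [← h]
    exact Finset.sum_congr rfl fun i _ => abs_sub_comm (q i) (p i)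
  loopless := by
    constructor
    intro p h
    simp only [sub_self, abs_zero, Finset.sum_const_zero] at h
    exact absurd h (by norm_num)

noncomputable instance gridGraph.locallyFinite (d : ℕ) : (gridGraph d).LocallyFinite := by
  intro v
  apply Set.Finite.fintype
  have hsub : (gridGraph d).neighborSet v ⊆
      Set.pi Set.univ fun i => Set.Icc (v i - 1) (v i + 1) := by
    intro w hw
    have hsum : ∑ i, |v i - w i| = 1 := hw
    rw [Set.mem_pi]
    intro i _
    have hle : |v i - w i| ≤ 1 := by
      calc |v i - w i| ≤ ∑ j, |v j - w j| :=
            Finset.single_le_sum (f := fun j => |v j - w j|) (fun j _ => abs_nonneg _) (Finset.mem_univ i)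
        _ = 1 := hsum
    obtain ⟨h1, h2⟩ := abs_le.mp hle
    exact ⟨by linarith, by linarith⟩
  exact (Set.Finite.pi fun i => Set.finite_Icc _ _).subset hsub

/-!
For a unit vector `e`, the difference `f = u - u (· + e)` is again harmonic, since translations are
automorphisms of the grid, and square-summable, since its squares are energies of distinct edges. On
a graph of bounded degree, summation by parts shows that a square-summable harmonic function has
zero Dirichlet energy; so `f` is constant along edges, hence constant, hence zero because the grid
is infinite. Thus `u` is invariant under the unit translations, which generate `ℤ^d`.
-/

section Harmonic

variable {G : SimpleGraph V} [G.LocallyFinite]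

lemma harmonic_one_iff {u : V → ℝ} :
    Harmonic G (fun _ _ => 1) u ↔ ∀ v, ∑ w ∈ G.neighborFinset v, (u v - u w) = 0 := by
  simp only [Harmonic, div_one]

lemma Harmonic.sub {r : V → V → ℝ} {u u' : V → ℝ} (hu : Harmonic G r u)
    (hu' : Harmonic G r u') : Harmonic G r (u - u') := by
  intro v
  calc ∑ w ∈ G.neighborFinset v, ((u - u') v - (u - u') w) / r v w
      = ∑ w ∈ G.neighborFinset v, ((u v - u w) / r v w - (u' v - u' w) / r v w) :=
        Finset.sum_congr rfl fun w _ => by simp only [Pi.sub_apply]; ring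
    _ = 0 := by rw [Finset.sum_sub_distrib, hu v, hu' v, sub_zero]

lemma Harmonic.comp_iso {W : Type*} {G' : SimpleGraph W} [G'.LocallyFinite] (φ : G' ≃g G)
    {r : V → V → ℝ} {u : V → ℝ} (hu : Harmonic G r u) :
    Harmonic G' (fun v w => r (φ v) (φ w)) (u ∘ φ) := by
  intro v
  rw [← hu (φ v)]
  exact Finset.sum_equiv φ.toEquiv (fun w => by simpa using φ.map_adj_iff.symm) (fun w _ => rfl)

end Harmonic

namespace SimpleGraph

variable {G : SimpleGraph V} [G.LocallyFinite] [DecidableRel G.Adj]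

lemma summable_ite_adj (F : V × V → ℝ) (v : V) :
    Summable fun w => if G.Adj v w then F (v, w) else 0 :=
  summable_of_ne_finset_zero (s := G.neighborFinset v) fun w hw => by simp_all

lemma tsum_ite_adj (F : V × V → ℝ) (v : V) :
    ∑' w, (if G.Adj v w then F (v, w) else 0) = ∑ w ∈ G.neighborFinset v, F (v, w) := by
  rw [tsum_eq_sum (s := G.neighborFinset v) fun w hw => by simp_all]
  exact Finset.sum_congr rfl fun w hw => if_pos ((G.mem_neighborFinset v w).mp hw)

lemma tsum_prod_ite_adj {F : V × V → ℝ}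
    (hF : Summable fun p : V × V => if G.Adj p.1 p.2 then F p else 0) :
    ∑' p : V × V, (if G.Adj p.1 p.2 then F p else 0) =
      ∑' v, ∑ w ∈ G.neighborFinset v, F (v, w) := by
  rw [hF.tsum_prod' (summable_ite_adj F)]
  exact tsum_congr (tsum_ite_adj F)

lemma summable_prod_ite_adj_of_degree_le {D : ℕ} (hdeg : ∀ v, G.degree v ≤ D) {g : V → ℝ}
    (hg₀ : 0 ≤ g) (hg : Summable g) :
    Summable fun p : V × V => if G.Adj p.1 p.2 then g p.1 else 0 := by
  have hnonneg : ∀ p : V × V, 0 ≤ if G.Adj p.1 p.2 then g p.1 else 0 := fun p => by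
    split_ifs
    exacts [hg₀ _, le_rfl]
  rw [summable_prod_of_nonneg hnonneg]
  refine ⟨summable_ite_adj (fun p => g p.1), ?_⟩
  have hsum : ∀ v, ∑' w, (if G.Adj v w then g v else 0) = G.degree v * g v := fun v => by
    rw [tsum_ite_adj (fun p => g p.1), Finset.sum_const (b := g v), card_neighborFinset_eq_degree,
      nsmul_eq_mul]
  simp only [hsum]
  refine .of_nonneg_of_le (fun v => mul_nonneg (Nat.cast_nonneg _) (hg₀ v))
    (fun v => ?_) (hg.mul_left (D : ℝ))
  exact mul_le_mul_of_nonneg_right (by exact_mod_cast hdeg v) (hg₀ v)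

end SimpleGraph

/-- Summed over ordered adjacent pairs, `f v (f v - f w)` gives `0` by harmonicity, and adding the
same sum with `v` and `w` swapped gives the Dirichlet energy, which therefore vanishes. -/
theorem Harmonic.eq_of_adj_of_summable_sq {G : SimpleGraph V} [G.LocallyFinite] {D : ℕ}
    (hdeg : ∀ v, G.degree v ≤ D) {f : V → ℝ} (hf : Harmonic G (fun _ _ => 1) f)
    (hsq : Summable fun v => f v ^ 2) {v w : V} (hvw : G.Adj v w) : f v = f w := by
  classical
  rw [harmonic_one_iff] at hf
  set F : V × V → ℝ := fun p => if G.Adj p.1 p.2 then f p.1 ^ 2 else 0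
  set H : V × V → ℝ := fun p => if G.Adj p.1 p.2 then f p.1 * (f p.1 - f p.2) else 0
  have hF : Summable F :=
    G.summable_prod_ite_adj_of_degree_le hdeg (fun v => sq_nonneg (f v)) hsq
  have hH_le : ∀ p, ‖H p‖ ≤ 2 * (F p + F p.swap) := fun p => by
    simp only [H, F, Prod.fst_swap, Prod.snd_swap, G.adj_comm p.2 p.1]
    split_ifs
    · rw [Real.norm_eq_abs, abs_le]
      constructor <;> nlinarith [sq_nonneg (f p.1 + f p.2), sq_nonneg (f p.1 - f p.2)]
    · simp
  have hH : Summable H := .of_norm_bounded ((hF.add hF.prod_symm).mul_left 2) hH_le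
  have hH_tsum : ∑' p, H p = 0 := by
    rw [G.tsum_prod_ite_adj hH]
    simp [← Finset.mul_sum, hf]
  have hH_swap_tsum : ∑' p : V × V, H p.swap = 0 :=
    ((Equiv.prodComm V V).tsum_eq H).trans hH_tsum
  have hE : HasSum (fun p : V × V => if G.Adj p.1 p.2 then (f p.1 - f p.2) ^ 2 else 0) 0 := by
    convert (hH.hasSum.add hH.prod_symm.hasSum) using 1
    · ext p
      simp only [H, Prod.fst_swap, Prod.snd_swap, G.adj_comm p.2 p.1]
      split_ifs <;> ring
    · rw [hH_tsum, hH_swap_tsum, add_zero]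
  have hE_zero := congrFun ((hasSum_zero_iff_of_nonneg fun p => by positivity).mp hE) (v, w)
  simpa [hvw, sub_eq_zero] using hE_zero

lemma summable_sq_sub_of_fnEnergy_ne_top {G : SimpleGraph V} {u : V → ℝ}
    (hu : fnEnergy G (fun _ _ => 1) u ≠ ⊤) {σ : V → V} (hσ : ∀ v, G.Adj v (σ v)) :
    Summable fun v => (u v - u (σ v)) ^ 2 := by
  classical
  set T := ∑' p : V × V, if G.Adj p.1 p.2 then ENNReal.ofReal ((u p.1 - u p.2) ^ 2 / 1) else 0
  have hT : T ≠ ⊤ := fun h => hu <| by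
    simp only [fnEnergy]
    convert ENNReal.mul_top (a := 2⁻¹) (by norm_num)
  have hle : ∑' v, ENNReal.ofReal ((u v - u (σ v)) ^ 2) ≤ T := by
    convert ENNReal.tsum_comp_le_tsum_of_injective (fun v w h => congrArg Prod.fst h :
      Function.Injective fun v => (v, σ v)) _ using 1
    exact tsum_congr fun v => by simp [hσ v]
  refine (ENNReal.summable_toReal (ne_top_of_le_ne_top hT hle)).congr fun v => ?_
  exact ENNReal.toReal_ofReal (sq_nonneg _)

lemma eq_of_forall_add_single_eq {ι α : Type*} [Finite ι] [DecidableEq ι] {g : (ι → ℤ) → α}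
    (hg : ∀ v i, g (v + Pi.single i 1) = g v) (v w : ι → ℤ) : g v = g w := by
  have hclosure : AddSubgroup.closure (Set.range fun i : ι => (Pi.single i 1 : ι → ℤ)) = ⊤ := by
    rw [← Submodule.span_int_eq_addSubgroupClosure, Submodule.toAddSubgroup_eq_top,
      ← funext (Pi.basisFun_apply ℤ ι)]
    exact (Pi.basisFun ℤ ι).span_eq
  have hperiod : ∀ t, ∀ x, g (x + t) = g x := fun t => by
    refine AddSubgroup.closure_induction (p := fun t _ => ∀ x, g (x + t) = g x) ?_ ?_ ?_ ?_
      (hclosure ▸ AddSubgroup.mem_top t)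
    · rintro _ ⟨i, rfl⟩ x
      exact hg x i
    · simp
    · intro s t _ _ hs ht x
      rw [← add_assoc, ht, hs]
    · intro t _ ht x
      rw [← ht (x + -t), neg_add_cancel_right]
  simp [← hperiod (w - v) v]

namespace gridGraph

variable {d : ℕ}

def translate (t : Fin d → ℤ) : gridGraph d ≃g gridGraph d where
  toEquiv := Equiv.addRight t
  map_rel_iff' {v w} := by
    change ∑ i, |(v i + t i) - (w i + t i)| = 1 ↔ ∑ i, |v i - w i| = 1
    simp only [add_sub_add_right_eq_sub]

@[simp]
lemma translate_apply (t v : Fin d → ℤ) : translate t v = v + t := rfl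

lemma adj_add_single (v : Fin d → ℤ) (i : Fin d) :
    (gridGraph d).Adj v (v + Pi.single i 1) := by
  change ∑ j, |v j - (v + Pi.single i 1 : Fin d → ℤ) j| = 1
  simp [Pi.single_apply, apply_ite]

lemma degree_eq_degree_zero (v : Fin d → ℤ) :
    (gridGraph d).degree v = (gridGraph d).degree 0 := by
  convert (translate v).degree_eq 0 using 2
  simp

end gridGraph

theorem grid_OHD_general (d : ℕ) (u : (Fin d → ℤ) → ℝ)
    (hharm : Harmonic (gridGraph d) (fun _ _ => 1) u)
    (hfin : fnEnergy (gridGraph d) (fun _ _ => 1) u ≠ ⊤) :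
    ∀ v w, u v = u w := by
  refine eq_of_forall_add_single_eq fun v i => ?_
  set f : (Fin d → ℤ) → ℝ := fun x => u x - u (x + Pi.single i 1)
  have hf_harm : Harmonic (gridGraph d) (fun _ _ => 1) f :=
    hharm.sub (hharm.comp_iso (gridGraph.translate (Pi.single i 1)))
  have hf_sq : Summable fun x => f x ^ 2 :=
    summable_sq_sub_of_fnEnergy_ne_top hfin (gridGraph.adj_add_single · i)
  have hf_const : ∀ x y, f x = f y := eq_of_forall_add_single_eq fun x j =>
    (hf_harm.eq_of_adj_of_summable_sq (gridGraph.degree_eq_degree_zero · |>.le)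
      hf_sq (gridGraph.adj_add_single x j)).symm
  have : Nonempty (Fin d) := ⟨i⟩
  have hf_zero : f v = 0 := by
    have : Summable fun _ : Fin d → ℤ => f v ^ 2 := hf_sq.congr fun x => by rw [hf_const x v]
    exact pow_eq_zero_iff two_ne_zero |>.mp ((summable_const_iff _).mp this)
  exact (sub_eq_zero.mp hf_zero).symm

/-- **The `d`-grid is `O_HD`**: every finite-energy harmonic function on the `d`-grid
is constant. -/
theorem grid_OHD (d : ℕ) (hd : 1 ≤ d) (u : (Fin d → ℤ) → ℝ)
    (hharm : Harmonic (gridGraph d) (fun _ _ => 1) u)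
    (hfin : fnEnergy (gridGraph d) (fun _ _ => 1) u ≠ ⊤) :
    ∀ v w, u v = u w :=
  grid_OHD_general d u hharm hfin
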